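/- Every maximal chain of the poset P_M induced by an n-maniplex M (with minimum F_{-1} and maximum F_n adjoined) contains exactly one face of each rank in {−1, 0, 1, ..., n}; in particular every maximal chain has n+2 elements. -/

import Mathlib

/-!
The incidence relation of `P_M` is transitive: a path inside a `k`-face can be reordered, since
`σ a` and `σ b` commute for `a + 1 < b`, into a path using colours above `k` followed by one using
colours below `k`, and the vertex in the middle lies on both outer faces. Faces of equal rank that
meet coincide, so the rank is injective on a chain. A maximal chain misses no rank `m`: the
`m`-face through a common vertex of its highest element below rank `m` and its lowest element
above rank `m` is comparable with the whole chain, hence belongs to it.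
-/


/-- An `n`-maniplex on vertex (flag) set `V`: a nonempty, connected, properly
`n`-edge-coloured simple `n`-regular graph (encoded by the fixed-point-free
involutions `σ i` giving the unique `i`-neighbour of each vertex) such that the
2-factors of colours `i`, `j` with `|i - j| > 1` are 4-cycles. -/
structure Maniplex (n : ℕ) (V : Type) where
  nonempty : Nonempty V
  σ : Fin n → V → V
  invol : ∀ i v, σ i (σ i v) = v
  nofix : ∀ i v, σ i v ≠ v
  conn : ∀ u v : V, Relation.ReflTransGen (fun x y => ∃ i, σ i x = y) u v
  comm : ∀ i j : Fin n, (i : ℕ) + 1 < (j : ℕ) → ∀ v,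
    σ i (σ j v) = σ j (σ i v) ∧ σ i v ≠ σ j v

namespace Maniplex

variable {n : ℕ} {V : Type}

/-- There is a path from `u` to `v` using only edges with colours in `A`. -/
def ReachIn (M : Maniplex n V) (A : Set (Fin n)) (u v : V) : Prop :=
  Relation.ReflTransGen (fun x y => ∃ i ∈ A, M.σ i x = y) u v

/-- The `i`-face of `M` containing `v`: the connected component of `v` in the
spanning subgraph with all edges of colour `i` deleted. -/
def face (M : Maniplex n V) (i : Fin n) (v : V) : Set V :=
  {u | M.ReachIn {j | j ≠ i} v u}

/-- `S` is an `i`-face of `M`. -/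
def IsFace (M : Maniplex n V) (i : Fin n) (S : Set V) : Prop :=
  ∃ v, S = M.face i v

end Maniplex
namespace Maniplex

variable {n : ℕ} {V : Type}

/-- The type of (proper) faces of a maniplex: a rank together with a face of that rank. -/
def FaceT (M : Maniplex n V) : Type := {F : Fin n × Set V // M.IsFace F.1 F.2}

/-- The order on faces: `F ≤ G` iff `rank F ≤ rank G` and `F ∩ G ≠ ∅`. -/
def faceLe (M : Maniplex n V) (F G : M.FaceT) : Prop :=
  F.1.1 ≤ G.1.1 ∧ (F.1.2 ∩ G.1.2).Nonempty

/-- The faces of `M` together with adjoined minimum `none` and maximum `some none`. -/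
def PFace (M : Maniplex n V) : Type := Option (Option M.FaceT)

/-- The order on `P_M` (with the improper minimum and maximum adjoined). -/
def ple (M : Maniplex n V) : M.PFace → M.PFace → Prop
  | none, _ => True
  | _, some none => True
  | some (some F), some (some G) => M.faceLe F G
  | _, _ => False

/-- The rank function of `P_M`. -/
def prank (M : Maniplex n V) : M.PFace → ℤ
  | none => -1
  | some none => (n : ℤ)
  | some (some F) => ((F.1.1 : ℕ) : ℤ)

/-- The component intersection property: for every chain of faces, the
intersection of the faces is a connected subgraph of `M`. -/
def CIP (M : Maniplex n V) : Prop :=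
  ∀ (k : ℕ) (r : Fin k → Fin n) (S : Fin k → Set V),
    (∀ a, M.IsFace (r a) (S a)) →
    (∀ a b, (S a ∩ S b).Nonempty) →
    ∀ u v : V, (∀ a, u ∈ S a) → (∀ a, v ∈ S a) →
      M.ReachIn {c | ∀ a, c ≠ r a} u v

/-- The diamond condition for the poset `P_M`. -/
def Diamond (M : Maniplex n V) : Prop :=
  ∀ (i : Fin n) (E F : M.PFace), M.ple E F →
    M.prank E = ((i : ℕ) : ℤ) - 1 → M.prank F = ((i : ℕ) : ℤ) + 1 →
    ∃ H₁ H₂ : M.PFace, H₁ ≠ H₂ ∧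
      ∀ H : M.PFace,
        (M.prank H = ((i : ℕ) : ℤ) ∧ M.ple E H ∧ M.ple H F) ↔ (H = H₁ ∨ H = H₂)

/-- A maximal chain of proper faces of `P_M`: one face of each rank,
pairwise incident. -/
def IsFlag (M : Maniplex n V) (S : Fin n → Set V) : Prop :=
  (∀ i, M.IsFace i (S i)) ∧ ∀ i j, ((S i) ∩ (S j)).Nonempty

/-- `P_M` is faithful: every maximal chain of proper faces has a unique common vertex. -/
def Faithful (M : Maniplex n V) : Prop :=
  ∀ S : Fin n → Set V, M.IsFlag S → ∃! v : V, ∀ i, v ∈ S i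

/-- Strong flag connectivity of `P_M`: any two maximal chains `Φ`, `Ψ` are joined
by a sequence of successively adjacent maximal chains all containing `Φ ∩ Ψ`. -/
def SFC (M : Maniplex n V) : Prop :=
  ∀ Φ Ψ : Fin n → Set V, M.IsFlag Φ → M.IsFlag Ψ →
    Relation.ReflTransGen
      (fun X Y => M.IsFlag Y ∧ (∃ j, X j ≠ Y j ∧ ∀ l, l ≠ j → X l = Y l) ∧
        ∀ i, Φ i = Ψ i → Y i = Φ i) Φ Ψ

/-- The strong path intersection property. -/
def SPIP (M : Maniplex n V) : Prop :=
  ∀ (A B : Set (Fin n)) (u v : V),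
    M.ReachIn A u v → M.ReachIn B u v → M.ReachIn (A ∩ B) u v

/-- The weak path intersection property. -/
def WPIP (M : Maniplex n V) : Prop :=
  ∀ i j : Fin n, i < j → ∀ u v : V,
    M.ReachIn {c | i < c} u v → M.ReachIn {c | c < j} u v →
    M.ReachIn {c | i < c ∧ c < j} u v

end Maniplex

theorem IsMaxChain.mem_of_forall_comparable {α : Type*} {r : α → α → Prop} {s : Set α} {a : α}
    (hs : IsMaxChain r s) (ha : ∀ b ∈ s, a ≠ b → r a b ∨ r b a) : a ∈ s :=
  (hs.2 (hs.1.insert ha) (Set.subset_insert a s)).symm ▸ Set.mem_insert a s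

namespace Maniplex

variable {n : ℕ} {V : Type} (M : Maniplex n V)

section Paths

variable {M}

theorem ReachIn.symm {A : Set (Fin n)} {u v : V} (h : M.ReachIn A u v) : M.ReachIn A v u := by
  induction h with
  | refl => exact .refl
  | tail _ hstep ih =>
    obtain ⟨i, hi, rfl⟩ := hstep
    exact ih.head ⟨i, hi, M.invol i _⟩

theorem ReachIn.mono {A B : Set (Fin n)} (hAB : A ⊆ B) {u v : V} (h : M.ReachIn A u v) :
    M.ReachIn B u v :=
  Relation.ReflTransGen.mono (fun _ _ ⟨i, hi, e⟩ => ⟨i, hAB hi, e⟩) _ _ h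

theorem ReachIn.map_σ {A : Set (Fin n)} {b : Fin n} (hAb : ∀ a ∈ A, (a : ℕ) + 1 < b) {x y : V}
    (h : M.ReachIn A x y) : M.ReachIn A (M.σ b x) (M.σ b y) := by
  induction h with
  | refl => exact .refl
  | tail _ hstep ih =>
    obtain ⟨a, ha, rfl⟩ := hstep
    exact ih.tail ⟨a, ha, (M.comm a b (hAb a ha) _).1⟩

theorem ReachIn.exists_reorder {A B : Set (Fin n)} (hAB : ∀ a ∈ A, ∀ b ∈ B, (a : ℕ) + 1 < b)
    {u w : V} (h : M.ReachIn (A ∪ B) u w) : ∃ x, M.ReachIn B u x ∧ M.ReachIn A x w := by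
  induction h with
  | refl => exact ⟨u, .refl, .refl⟩
  | tail _ hstep ih =>
    obtain ⟨x, hux, hxy⟩ := ih
    obtain ⟨c, hc | hc, rfl⟩ := hstep
    · exact ⟨x, hux, hxy.tail ⟨c, hc, rfl⟩⟩
    · exact ⟨M.σ c x, hux.tail ⟨c, hc, rfl⟩, hxy.map_σ fun a ha => hAB a ha c hc⟩

theorem ReachIn.exists_above_then_below {k : Fin n} {u w : V}
    (h : M.ReachIn {c | c ≠ k} u w) :
    ∃ x, M.ReachIn {c | k < c} u x ∧ M.ReachIn {c | c < k} x w := by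
  refine ReachIn.exists_reorder (fun a (ha : a < k) b (hb : k < b) => ?_) (h.mono ?_)
  · have := Fin.lt_def.mp ha
    have := Fin.lt_def.mp hb
    omega
  · intro c (hc : c ≠ k)
    exact lt_or_gt_of_ne hc

end Paths

section Faces

theorem mem_face_self (i : Fin n) (v : V) : v ∈ M.face i v :=
  Relation.ReflTransGen.refl

variable {M}

theorem face_eq_of_mem {i : Fin n} {u v : V} (h : u ∈ M.face i v) : M.face i u = M.face i v := by
  ext w
  exact ⟨fun hw => Relation.ReflTransGen.trans (h : M.ReachIn _ v u) hw,
    fun hw => Relation.ReflTransGen.trans (ReachIn.symm h) hw⟩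

theorem IsFace.eq_face_of_mem {i : Fin n} {S : Set V} (hS : M.IsFace i S) {u : V} (hu : u ∈ S) :
    S = M.face i u := by
  obtain ⟨v, rfl⟩ := hS
  exact (face_eq_of_mem hu).symm

theorem IsFace.nonempty {i : Fin n} {S : Set V} (hS : M.IsFace i S) : S.Nonempty := by
  obtain ⟨v, rfl⟩ := hS
  exact ⟨v, M.mem_face_self i v⟩

theorem IsFace.eq_of_inter_nonempty {i : Fin n} {S T : Set V} (hS : M.IsFace i S)
    (hT : M.IsFace i T) (hST : (S ∩ T).Nonempty) : S = T := by
  obtain ⟨u, huS, huT⟩ := hST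
  rw [hS.eq_face_of_mem huS, hT.eq_face_of_mem huT]

end Faces

section FaceOrder

def faceAt (i : Fin n) (v : V) : M.FaceT := ⟨(i, M.face i v), v, rfl⟩

variable {M}

theorem faceLe_refl (F : M.FaceT) : M.faceLe F F :=
  ⟨le_rfl, by simpa using F.2.nonempty⟩

theorem faceLe_trans {F G H : M.FaceT} (hFG : M.faceLe F G) (hGH : M.faceLe G H) :
    M.faceLe F H := by
  obtain ⟨hFG, u, huF, huG⟩ := hFG
  obtain ⟨hGH, w, hwG, hwH⟩ := hGH
  have huw : M.ReachIn {c | c ≠ G.1.1} u w := by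
    rw [G.2.eq_face_of_mem huG] at hwG
    exact hwG
  obtain ⟨x, hux, hxw⟩ := huw.exists_above_then_below
  refine ⟨hFG.trans hGH, x, ?_, ?_⟩
  · rw [F.2.eq_face_of_mem huF]
    exact hux.mono fun c (hc : G.1.1 < c) => (hFG.trans_lt hc).ne'
  · rw [H.2.eq_face_of_mem hwH]
    exact hxw.symm.mono fun c (hc : c < G.1.1) => (hc.trans_le hGH).ne

theorem eq_of_faceLe_of_rank_eq {F G : M.FaceT} (h : M.faceLe F G) (hr : F.1.1 = G.1.1) :
    F = G := by
  have hS : F.1.2 = G.1.2 := F.2.eq_of_inter_nonempty (hr ▸ G.2) h.2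
  exact Subtype.ext (Prod.ext hr hS)

theorem faceLe_faceAt {F : M.FaceT} {i : Fin n} {v : V} (hi : F.1.1 ≤ i) (hv : v ∈ F.1.2) :
    M.faceLe F (M.faceAt i v) :=
  ⟨hi, v, hv, M.mem_face_self i v⟩

theorem faceAt_faceLe {F : M.FaceT} {i : Fin n} {v : V} (hi : i ≤ F.1.1) (hv : v ∈ F.1.2) :
    M.faceLe (M.faceAt i v) F :=
  ⟨hi, v, M.mem_face_self i v, hv⟩

end FaceOrder

section FacePoset

variable {M}

theorem ple_refl (a : M.PFace) : M.ple a a := by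
  rcases a with _ | _ | F
  exacts [trivial, trivial, faceLe_refl F]

instance : Std.Refl M.ple := ⟨ple_refl⟩

theorem ple_trans {a b c : M.PFace} (hab : M.ple a b) (hbc : M.ple b c) : M.ple a c := by
  rcases a with _ | _ | F <;> rcases b with _ | _ | G <;> rcases c with _ | _ | H <;>
    first
      | trivial
      | exact hab.elim
      | exact hbc.elim
      | exact faceLe_trans hab hbc

theorem prank_mem_Icc (a : M.PFace) : M.prank a ∈ Set.Icc (-1) (n : ℤ) := by
  rcases a with _ | _ | F
  · exact ⟨le_rfl, by simp [prank]⟩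
  · exact ⟨by simp [prank], le_rfl⟩
  · exact ⟨by simp [prank], by simp [prank]⟩

theorem prank_image_subset (s : Set M.PFace) : M.prank '' s ⊆ Set.Icc (-1) (n : ℤ) :=
  Set.image_subset_iff.2 fun a _ => prank_mem_Icc a

theorem prank_le_of_ple {a b : M.PFace} (h : M.ple a b) : M.prank a ≤ M.prank b := by
  rcases a with _ | _ | F
  · exact (prank_mem_Icc b).1
  · rcases b with _ | _ | G
    exacts [h.elim, le_rfl, h.elim]
  · rcases b with _ | _ | G
    · exact h.elim
    · exact (prank_mem_Icc _).2
    · exact Int.ofNat_le.mpr h.1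

theorem eq_of_ple_of_prank_eq {a b : M.PFace} (h : M.ple a b) (hr : M.prank a = M.prank b) :
    a = b := by
  have ha := prank_mem_Icc a
  have hb := prank_mem_Icc b
  rcases a with _ | _ | F <;> rcases b with _ | _ | G <;> simp only [prank] at hr ha hb
  · rfl
  · omega
  · omega
  · omega
  · rfl
  · omega
  · omega
  · omega
  · exact congrArg (some ∘ some) (eq_of_faceLe_of_rank_eq h (Fin.ext (by exact_mod_cast hr)))

/-- The witness is the `m`-face through a common vertex of `a` and `b` (any vertex of a proper
end, if the other is improper). -/
theorem exists_between {a b : M.PFace} (hab : M.ple a b) {m : ℤ} (ha : M.prank a < m)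
    (hb : m < M.prank b) : ∃ x, M.prank x = m ∧ M.ple a x ∧ M.ple x b := by
  obtain ⟨ha₀, -⟩ := prank_mem_Icc a
  obtain ⟨-, hb₀⟩ := prank_mem_Icc b
  have hmn : m.toNat < n := by omega
  set i : Fin n := ⟨m.toNat, hmn⟩
  have hrank (v : V) : M.prank (some (some (M.faceAt i v))) = m := by
    change ((m.toNat : ℕ) : ℤ) = m
    omega
  have below (F : M.FaceT) (hF : ((F.1.1 : ℕ) : ℤ) < m) : F.1.1 ≤ i := by
    rw [Fin.le_def]
    change _ ≤ m.toNat
    omega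
  have above (G : M.FaceT) (hG : m < ((G.1.1 : ℕ) : ℤ)) : i ≤ G.1.1 := by
    rw [Fin.le_def]
    change m.toNat ≤ _
    omega
  rcases a with _ | _ | F
  · rcases b with _ | _ | G
    · exact absurd (ha.trans hb) (lt_irrefl _)
    · obtain ⟨v⟩ := M.nonempty
      exact ⟨_, hrank v, trivial, trivial⟩
    · obtain ⟨v, hv⟩ := G.2.nonempty
      exact ⟨_, hrank v, trivial, faceAt_faceLe (above G hb) hv⟩
  · exact absurd (ha.trans hb) (not_lt.2 (prank_mem_Icc b).2)
  · rcases b with _ | _ | G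
    · exact hab.elim
    · obtain ⟨v, hv⟩ := F.2.nonempty
      exact ⟨_, hrank v, faceLe_faceAt (below F ha) hv, trivial⟩
    · obtain ⟨-, v, hvF, hvG⟩ := hab
      exact ⟨_, hrank v, faceLe_faceAt (below F ha) hvF,
        faceAt_faceLe (above G hb) hvG⟩

end FacePoset

section MaxChain

variable {M} {C : Set M.PFace}

theorem _root_.IsChain.prank_injOn (hC : IsChain M.ple C) : Set.InjOn M.prank C := by
  intro a ha b hb hr
  rcases hC.total ha hb with h | h
  exacts [eq_of_ple_of_prank_eq h hr, (eq_of_ple_of_prank_eq h hr.symm).symm]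

theorem _root_.IsChain.ple_of_prank_le (hC : IsChain M.ple C) {a b : M.PFace} (ha : a ∈ C)
    (hb : b ∈ C) (hr : M.prank a ≤ M.prank b) : M.ple a b := by
  rcases hC.total ha hb with h | h
  · exact h
  · rw [hC.prank_injOn hb ha (le_antisymm (prank_le_of_ple h) hr)]
    exact ple_refl a

theorem _root_.IsChain.finite (hC : IsChain M.ple C) : C.Finite :=
  Set.Finite.of_finite_image ((Set.finite_Icc _ _).subset (prank_image_subset C)) hC.prank_injOn

theorem _root_.IsMaxChain.exists_prank_eq (hC : IsMaxChain M.ple C) {m : ℤ}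
    (hm : m ∈ Set.Icc (-1) (n : ℤ)) : ∃ a ∈ C, M.prank a = m := by
  by_contra! hne
  have hbot : (none : M.PFace) ∈ C := hC.mem_of_forall_comparable fun b _ _ => .inl trivial
  have htop : (some none : M.PFace) ∈ C :=
    hC.mem_of_forall_comparable fun b _ _ => .inr (by rcases b with _ | _ | _ <;> trivial)
  have hlow : M.prank none < m := lt_of_le_of_ne hm.1 (hne _ hbot)
  have hhigh : m < M.prank (some none) := lt_of_le_of_ne hm.2 (hne _ htop).symm
  obtain ⟨a, ⟨haC, ha⟩, hamax⟩ := Set.exists_max_image {c | c ∈ C ∧ M.prank c < m} M.prank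
    (hC.1.finite.subset fun _ h => h.1) ⟨none, hbot, hlow⟩
  obtain ⟨b, ⟨hbC, hb⟩, hbmin⟩ := Set.exists_min_image {c | c ∈ C ∧ m < M.prank c} M.prank
    (hC.1.finite.subset fun _ h => h.1) ⟨some none, htop, hhigh⟩
  obtain ⟨x, hx, hax, hxb⟩ := exists_between (hC.1.ple_of_prank_le haC hbC (ha.trans hb).le) ha hb
  refine hne x (hC.mem_of_forall_comparable fun c hc _ => ?_) hx
  rcases lt_or_gt_of_ne (hne c hc) with hcm | hcm
  · exact .inr (ple_trans (hC.1.ple_of_prank_le hc haC (hamax c ⟨hc, hcm⟩)) hax)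
  · exact .inl (ple_trans hxb (hC.1.ple_of_prank_le hbC hc (hbmin c ⟨hc, hcm⟩)))

end MaxChain

end Maniplex

/-- Every maximal chain of the poset `P_M` induced by an `n`-maniplex `M` (with
minimum and maximum adjoined) contains exactly one face of each rank in
`{-1, 0, ..., n}`; in particular it has `n + 2` elements. -/
theorem maxChain_has_all_ranks {n : ℕ} {V : Type} (M : Maniplex n V)
    (C : Set M.PFace) (hC : IsMaxChain M.ple C) :
    (∀ m : ℤ, -1 ≤ m → m ≤ (n : ℤ) → ∃! F, F ∈ C ∧ M.prank F = m) ∧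
      C.ncard = n + 2 := by
  have hinj : Set.InjOn M.prank C := hC.1.prank_injOn
  have himage : M.prank '' C = Set.Icc (-1) (n : ℤ) :=
    (Maniplex.prank_image_subset C).antisymm fun _ hm => hC.exists_prank_eq hm
  refine ⟨fun m h₁ h₂ => ?_, ?_⟩
  · obtain ⟨a, haC, ha⟩ := hC.exists_prank_eq ⟨h₁, h₂⟩
    exact ⟨a, ⟨haC, ha⟩, fun b hb => hinj hb.1 haC (hb.2.trans ha.symm)⟩
  · rw [← hinj.ncard_image, himage, ← Finset.coe_Icc, Set.ncard_coe_finset, Int.card_Icc]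
    omega
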